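/- For every δ > 1/2 there exists a constant C, depending only on δ, c_φ, C_φ, τ, M and ∫x²φ(x)dx, such that for all n ≥ 1: E[ Σ_{l ≥ 1} Σ_{0 ≤ k < 2^l} 2^{−l} l^{−2δ} ∫_ℝ (θ − θ_{0,lk})² dπ_{lk}(θ | X_{lk}) ] ≤ C/n, where the expectation is over the independent standard normal variables ε_{lk}. -/

import Mathlib

/-!
Each coordinate is handled separately, with a bound `C / n` uniform in `σ` and in
`|θ₀| ≤ M σ`; summing these against the weights `2^{-l} l^{-2δ}` costs only `∑ l^{-2δ} < ∞`.
For one coordinate write `x = θ₀ + ε / √n` and `r = min σ n^{-1/2}`. The posterior normaliser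
is at least `c_φ r e^{-1/8 - m²/2} / 4` with `m = (|ε| - √n r / 4)₊`: integrate over a window
of length `r/4` at distance `r/4` from `θ₀` on the side of `ε`, where the prior density is at
least `c_φ`. The unnormalised second moment is at most `C_φ √(2π/n) (1 + ε²) / n` (Gaussian
variance, when `σ ≥ n^{-1/2}`) or `2 σ³ (∫ u²φ + M²)` (prior second moment, when
`σ ≤ n^{-1/2}`). Finally `E[e^{m²/2}] ≤ 2 / a` for `ε ~ N(0,1)` and `a = √n r / 4 ≤ 1`,
since the tilt leaves the tail `e^{-a|ε|}`; in the second regime `σ² / (√n σ) ≤ 1 / n`.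
-/

open MeasureTheory ProbabilityTheory

/-- Posterior second moment `∫ (θ-θ₀)² dπ(θ|x)` for the prior with density `σ⁻¹φ(·/σ)`
in the Gaussian observation model `x | θ ~ N(θ, 1/n)`. -/
noncomputable def postSecondMoment (φ : ℝ → ℝ) (n : ℕ) (σ θ₀ x : ℝ) : ℝ :=
  (∫ θ : ℝ, (θ - θ₀) ^ 2 * (Real.exp (-(n : ℝ) * (θ - x) ^ 2 / 2) * φ (θ / σ))) /
    (∫ θ : ℝ, Real.exp (-(n : ℝ) * (θ - x) ^ 2 / 2) * φ (θ / σ))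

open Real
open scoped NNReal

theorem integral_sq_gaussianReal (μ : ℝ) (v : ℝ≥0) :
    ∫ y, y ^ 2 ∂gaussianReal μ v = v + μ ^ 2 := by
  have h := variance_eq_sub (memLp_id_gaussianReal (μ := μ) (v := v) 2)
  simp only [variance_id_gaussianReal, Pi.pow_apply, id, integral_id_gaussianReal] at h
  linarith

theorem integral_sub_sq_mul_exp_neg_mul_sub_sq {b : ℝ} (hb : 0 < b) (c x : ℝ) :
    ∫ θ, (θ - c) ^ 2 * rexp (-b * (θ - x) ^ 2 / 2) = √(2 * π / b) * (b⁻¹ + (x - c) ^ 2) := by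
  set v : ℝ≥0 := ⟨b⁻¹, (inv_pos.2 hb).le⟩
  have hvb : (v : ℝ) = b⁻¹ := rfl
  have hv0 : v ≠ 0 := fun h => by simpa [hvb, hb.ne'] using congrArg NNReal.toReal h
  have hpdf : ∀ θ, (θ - c) ^ 2 * rexp (-b * (θ - x) ^ 2 / 2) =
      √(2 * π / b) * (gaussianPDFReal x v θ • (θ - c) ^ 2) := by
    intro θ
    rw [gaussianPDFReal, smul_eq_mul, hvb, ← div_eq_mul_inv,
      show -(θ - x) ^ 2 / (2 * b⁻¹) = -b * (θ - x) ^ 2 / 2 by field_simp]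
    field_simp
  have hmap : ∫ θ, (θ - c) ^ 2 ∂gaussianReal x v = ∫ y, y ^ 2 ∂gaussianReal (x - c) v := by
    rw [← gaussianReal_map_sub_const c, integral_map (by fun_prop) (by fun_prop)]
  simp_rw [hpdf, integral_const_mul, ← integral_gaussianReal_eq_integral_smul hv0, hmap,
    integral_sq_gaussianReal, hvb]

theorem integrable_exp_neg_mul_sub_sq {b : ℝ} (hb : 0 < b) (x : ℝ) :
    Integrable fun θ => rexp (-b * (θ - x) ^ 2 / 2) :=
  ((integrable_exp_neg_mul_sq (half_pos hb)).comp_sub_right x).congr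
    (ae_of_all _ fun θ => by simp only; ring_nf)

theorem integrable_sub_sq_mul_exp_neg_mul_sub_sq {b : ℝ} (hb : 0 < b) (c x : ℝ) :
    Integrable fun θ => (θ - c) ^ 2 * rexp (-b * (θ - x) ^ 2 / 2) :=
  Integrable.of_integral_ne_zero <| by
    rw [integral_sub_sq_mul_exp_neg_mul_sub_sq hb]; positivity

theorem integral_exp_neg_mul_abs {a : ℝ} (ha : 0 < a) : ∫ x, rexp (-a * |x|) = 2 / a := by
  rw [integral_comp_abs (f := fun y => rexp (-a * y)), integral_exp_mul_Ioi (by linarith)]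
  field_simp
  simp

theorem integrable_exp_neg_mul_abs {a : ℝ} (ha : 0 < a) : Integrable fun x => rexp (-a * |x|) :=
  Integrable.of_integral_ne_zero (by rw [integral_exp_neg_mul_abs ha]; positivity)

theorem lintegral_gaussianReal_le_of_mul_gaussianPDFReal_le {g h : ℝ → ℝ} (hg : Measurable g)
    (hh : Integrable h) (hgh : ∀ x, gaussianPDFReal 0 1 x * g x ≤ h x) (hg0 : ∀ x, 0 ≤ g x) :
    ∫⁻ x, ENNReal.ofReal (g x) ∂gaussianReal 0 1 ≤ ENNReal.ofReal (∫ x, h x) := by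
  have hh0 : 0 ≤ᵐ[volume] h := ae_of_all _ fun x =>
    (mul_nonneg (gaussianPDFReal_nonneg 0 1 x) (hg0 x)).trans (hgh x)
  rw [gaussianReal_of_var_ne_zero _ one_ne_zero,
    lintegral_withDensity_eq_lintegral_mul _ (measurable_gaussianPDF _ _) hg.ennreal_ofReal,
    ofReal_integral_eq_lintegral_ofReal hh hh0]
  refine lintegral_mono fun x => ?_
  simp only [Pi.mul_apply, gaussianPDF]
  rw [← ENNReal.ofReal_mul (gaussianPDFReal_nonneg _ _ _)]
  exact ENNReal.ofReal_le_ofReal (hgh x)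

theorem gaussianPDFReal_mul_exp_sq_le {a : ℝ} (ha0 : 0 ≤ a) (ha1 : a ≤ 1) (x : ℝ) :
    gaussianPDFReal 0 1 x * rexp (max (|x| - a) 0 ^ 2 / 2) ≤ rexp (-a * |x|) := by
  have hmax : max (|x| - a) 0 ^ 2 ≤ (|x| - a) ^ 2 := by
    rcases le_total (|x| - a) 0 with h | h
    · rw [max_eq_right h]; nlinarith
    · rw [max_eq_left h]
  have hexp : rexp (a ^ 2 / 2) ≤ √(2 * π) := by
    calc rexp (a ^ 2 / 2) ≤ rexp (1 / 2) := exp_le_exp.2 (by nlinarith)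
      _ = √(rexp 1) := exp_half 1
      _ ≤ √(2 * π) := sqrt_le_sqrt (by linarith [exp_one_lt_d9, pi_gt_three])
  have hx : -x ^ 2 / 2 + max (|x| - a) 0 ^ 2 / 2 ≤ a ^ 2 / 2 + -a * |x| := by
    nlinarith [sq_abs x]
  calc gaussianPDFReal 0 1 x * rexp (max (|x| - a) 0 ^ 2 / 2)
      = (√(2 * π))⁻¹ * rexp (-x ^ 2 / 2 + max (|x| - a) 0 ^ 2 / 2) := by
        simp [gaussianPDFReal, mul_assoc, exp_add]
    _ ≤ (√(2 * π))⁻¹ * (rexp (a ^ 2 / 2) * rexp (-a * |x|)) := by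
        rw [← exp_add]; gcongr
    _ ≤ (√(2 * π))⁻¹ * (√(2 * π) * rexp (-a * |x|)) := by gcongr
    _ = rexp (-a * |x|) := by field_simp

theorem lintegral_exp_sq_gaussianReal_le {a : ℝ} (ha0 : 0 < a) (ha1 : a ≤ 1) :
    ∫⁻ x, ENNReal.ofReal (rexp (max (|x| - a) 0 ^ 2 / 2)) ∂gaussianReal 0 1 ≤
      ENNReal.ofReal (2 / a) := by
  rw [← integral_exp_neg_mul_abs ha0]
  exact lintegral_gaussianReal_le_of_mul_gaussianPDFReal_le (by fun_prop)
    (integrable_exp_neg_mul_abs ha0) (gaussianPDFReal_mul_exp_sq_le ha0.le ha1)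
    fun _ => (exp_pos _).le

theorem one_add_sq_mul_exp_le (x : ℝ) :
    (1 + x ^ 2) * rexp (-(1 / 4) * |x|) ≤ 128 * rexp (-(1 / 8) * |x|) := by
  have h := quadratic_le_exp_of_nonneg (by positivity : 0 ≤ |x| / 8)
  have hsplit : rexp (-(1 / 8) * |x|) = rexp (|x| / 8) * rexp (-(1 / 4) * |x|) := by
    rw [← exp_add]; ring_nf
  rw [hsplit, ← mul_assoc]
  gcongr
  nlinarith [sq_abs x, abs_nonneg x]

theorem lintegral_one_add_sq_mul_exp_sq_gaussianReal_le :
    ∫⁻ x, ENNReal.ofReal ((1 + x ^ 2) * rexp (max (|x| - 1 / 4) 0 ^ 2 / 2)) ∂gaussianReal 0 1 ≤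
      ENNReal.ofReal 2048 := by
  refine (lintegral_gaussianReal_le_of_mul_gaussianPDFReal_le (by fun_prop)
    ((integrable_exp_neg_mul_abs (a := 1 / 8) (by norm_num)).const_mul 128) (fun x => ?_)
    fun x => by positivity).trans ?_
  · calc gaussianPDFReal 0 1 x * ((1 + x ^ 2) * rexp (max (|x| - 1 / 4) 0 ^ 2 / 2))
        = (1 + x ^ 2) * (gaussianPDFReal 0 1 x * rexp (max (|x| - 1 / 4) 0 ^ 2 / 2)) := by ring
      _ ≤ (1 + x ^ 2) * rexp (-(1 / 4) * |x|) := by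
          gcongr; exact gaussianPDFReal_mul_exp_sq_le (by norm_num) (by norm_num) x
      _ ≤ 128 * rexp (-(1 / 8) * |x|) := one_add_sq_mul_exp_le x
  · rw [integral_const_mul, integral_exp_neg_mul_abs (by norm_num)]
    norm_num

theorem sub_sq_le_of_same_sign {a v e : ℝ} (hav : a ≤ |v|) (hv : |v| ≤ 2 * a) (hve : 0 ≤ v * e) :
    (v - e) ^ 2 ≤ 4 * a ^ 2 + max (|e| - a) 0 ^ 2 := by
  have habs : (v - e) ^ 2 = (|v| - |e|) ^ 2 := by
    rw [sub_sq, sub_sq, sq_abs, sq_abs, mul_assoc, mul_assoc, ← abs_mul, abs_of_nonneg hve]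
  rw [habs]
  rcases le_total |e| (2 * a) with he | he
  · nlinarith [abs_nonneg e, sq_nonneg (max (|e| - a) 0)]
  · rw [max_eq_left (by linarith)]
    nlinarith [abs_nonneg v]

theorem lintegral_ofReal_le_of_le_mul {α : Type*} [MeasurableSpace α] {μ : Measure α}
    {f g : α → ℝ} {c B : ℝ} (hc : 0 ≤ c) (hfg : ∀ x, f x ≤ c * g x)
    (hg : ∫⁻ x, ENNReal.ofReal (g x) ∂μ ≤ ENNReal.ofReal B) :
    ∫⁻ x, ENNReal.ofReal (f x) ∂μ ≤ ENNReal.ofReal (c * B) :=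
  calc ∫⁻ x, ENNReal.ofReal (f x) ∂μ ≤ ∫⁻ x, ENNReal.ofReal c * ENNReal.ofReal (g x) ∂μ :=
        lintegral_mono fun x => (ENNReal.ofReal_le_ofReal (hfg x)).trans_eq (ENNReal.ofReal_mul hc)
    _ = ENNReal.ofReal c * ∫⁻ x, ENNReal.ofReal (g x) ∂μ :=
        lintegral_const_mul' _ _ ENNReal.ofReal_ne_top
    _ ≤ ENNReal.ofReal (c * B) := by rw [ENNReal.ofReal_mul hc]; gcongr

theorem lintegral_tsum_dyadic_le {Ω : Type*} [MeasurableSpace Ω] {P : Measure Ω} {δ : ℝ}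
    (hδ : 1 / 2 < δ) {f : (l : ℕ+) → Fin (2 ^ (l : ℕ)) → Ω → ℝ} (hf : ∀ l k, Measurable (f l k))
    {B : ℝ} (hB : ∀ l k, ∫⁻ ω, ENNReal.ofReal (f l k ω) ∂P ≤ ENNReal.ofReal B) :
    ∫⁻ ω, ∑' (l : ℕ+) (k : Fin (2 ^ (l : ℕ))),
        ENNReal.ofReal ((2 : ℝ) ^ (-((l : ℕ) : ℝ)) * ((l : ℕ) : ℝ) ^ (-(2 * δ)) * f l k ω) ∂P ≤
      ENNReal.ofReal ((∑' l : ℕ+, ((l : ℕ) : ℝ) ^ (-(2 * δ))) * B) := by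
  have hsummable : Summable fun l : ℕ+ => ((l : ℕ) : ℝ) ^ (-(2 * δ)) :=
    (summable_nat_rpow.2 (by linarith)).comp_injective PNat.coe_injective
  have hlevel : ∀ (l : ℕ+) (c : ENNReal),
      ∑' _ : Fin (2 ^ (l : ℕ)), ENNReal.ofReal ((2 : ℝ) ^ (-((l : ℕ) : ℝ))) * c = c := by
    intro l c
    rw [tsum_fintype, Finset.sum_const, Finset.card_univ, Fintype.card_fin, nsmul_eq_mul,
      ← mul_assoc, ← ENNReal.ofReal_natCast, ← ENNReal.ofReal_mul (by positivity),
      Nat.cast_pow, Nat.cast_ofNat, rpow_neg zero_le_two, rpow_natCast,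
      mul_inv_cancel₀ (by positivity), ENNReal.ofReal_one, one_mul]
  calc _ = ∑' (l : ℕ+) (k : Fin (2 ^ (l : ℕ))), ENNReal.ofReal ((2 : ℝ) ^ (-((l : ℕ) : ℝ))) *
        (ENNReal.ofReal (((l : ℕ) : ℝ) ^ (-(2 * δ))) * ∫⁻ ω, ENNReal.ofReal (f l k ω) ∂P) := by
        rw [lintegral_tsum fun l => by fun_prop]
        refine tsum_congr fun l => ?_
        rw [lintegral_tsum fun k => by fun_prop]
        refine tsum_congr fun k => ?_
        have h2 : (0 : ℝ) ≤ 2 ^ (-((l : ℕ) : ℝ)) := by positivity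
        have hw : (0 : ℝ) ≤ 2 ^ (-((l : ℕ) : ℝ)) * ((l : ℕ) : ℝ) ^ (-(2 * δ)) := by positivity
        simp_rw [ENNReal.ofReal_mul hw, ENNReal.ofReal_mul h2, mul_assoc]
        rw [lintegral_const_mul' _ _ ENNReal.ofReal_ne_top,
          lintegral_const_mul' _ _ ENNReal.ofReal_ne_top]
    _ ≤ ∑' (l : ℕ+) (_ : Fin (2 ^ (l : ℕ))), ENNReal.ofReal ((2 : ℝ) ^ (-((l : ℕ) : ℝ))) *
        (ENNReal.ofReal (((l : ℕ) : ℝ) ^ (-(2 * δ))) * ENNReal.ofReal B) := by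
        gcongr with l k
        exact hB l k
    _ = ENNReal.ofReal ((∑' l : ℕ+, ((l : ℕ) : ℝ) ^ (-(2 * δ))) * B) := by
        simp_rw [hlevel]
        rw [ENNReal.tsum_mul_right, ← ENNReal.ofReal_tsum_of_nonneg (fun l => by positivity)
          hsummable, ← ENNReal.ofReal_mul (tsum_nonneg fun l => by positivity)]

section Posterior

variable {φ : ℝ → ℝ} {Cφ : ℝ}

@[fun_prop]
theorem measurable_postSecondMoment (hφ : Measurable φ) (n : ℕ) (σ θ₀ : ℝ) :
    Measurable (postSecondMoment φ n σ θ₀) := by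
  have hkernel : Measurable fun p : ℝ × ℝ => rexp (-(n : ℝ) * (p.2 - p.1) ^ 2 / 2) * φ (p.2 / σ) :=
    by fun_prop
  have hnum : Measurable fun p : ℝ × ℝ =>
      (p.2 - θ₀) ^ 2 * (rexp (-(n : ℝ) * (p.2 - p.1) ^ 2 / 2) * φ (p.2 / σ)) := by fun_prop
  exact hnum.stronglyMeasurable.integral_prod_right'.measurable.div
    hkernel.stronglyMeasurable.integral_prod_right'.measurable

theorem integrable_exp_mul_comp_div (hφ : Measurable φ) (hφ0 : ∀ x, 0 ≤ φ x)
    (hub : ∀ x, φ x ≤ Cφ) {b : ℝ} (hb : 0 < b) (σ x : ℝ) :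
    Integrable fun θ => rexp (-b * (θ - x) ^ 2 / 2) * φ (θ / σ) :=
  (integrable_exp_neg_mul_sub_sq hb x).mul_bdd
    (hφ.comp (measurable_id.div_const σ)).aestronglyMeasurable
    (ae_of_all _ fun θ => by rw [norm_of_nonneg (hφ0 _)]; exact hub _)

theorem postSecondMoment_numerator_le_of_bounded (hφ0 : ∀ x, 0 ≤ φ x) (hub : ∀ x, φ x ≤ Cφ)
    {n : ℕ} (hn : 0 < n) (σ θ₀ x : ℝ) :
    ∫ θ, (θ - θ₀) ^ 2 * (rexp (-(n : ℝ) * (θ - x) ^ 2 / 2) * φ (θ / σ)) ≤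
      Cφ * (√(2 * π / n) * ((n : ℝ)⁻¹ + (x - θ₀) ^ 2)) := by
  have hn' : (0 : ℝ) < n := Nat.cast_pos.2 hn
  rw [← integral_sub_sq_mul_exp_neg_mul_sub_sq hn' θ₀ x, ← integral_const_mul]
  refine integral_mono_of_nonneg
    (ae_of_all _ fun θ => mul_nonneg (sq_nonneg _) (mul_nonneg (exp_pos _).le (hφ0 _)))
    ((integrable_sub_sq_mul_exp_neg_mul_sub_sq hn' θ₀ x).const_mul Cφ) (ae_of_all _ fun θ => ?_)
  calc (θ - θ₀) ^ 2 * (rexp (-(n : ℝ) * (θ - x) ^ 2 / 2) * φ (θ / σ))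
      = ((θ - θ₀) ^ 2 * rexp (-(n : ℝ) * (θ - x) ^ 2 / 2)) * φ (θ / σ) := by ring
    _ ≤ ((θ - θ₀) ^ 2 * rexp (-(n : ℝ) * (θ - x) ^ 2 / 2)) * Cφ := by gcongr; exact hub _
    _ = Cφ * ((θ - θ₀) ^ 2 * rexp (-(n : ℝ) * (θ - x) ^ 2 / 2)) := by ring

theorem postSecondMoment_numerator_le_of_moment (hφ0 : ∀ x, 0 ≤ φ x)
    (hφ_prob : ∫ x, φ x = 1) (hmom : Integrable fun x => x ^ 2 * φ x) {M σ θ₀ : ℝ}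
    (hσ : 0 < σ) (hθ : |θ₀| ≤ M * σ) (n : ℕ) (x : ℝ) :
    ∫ θ, (θ - θ₀) ^ 2 * (rexp (-(n : ℝ) * (θ - x) ^ 2 / 2) * φ (θ / σ)) ≤
      2 * σ ^ 3 * ((∫ u, u ^ 2 * φ u) + M ^ 2) := by
  have hφ_int : Integrable φ := Integrable.of_integral_ne_zero (by rw [hφ_prob]; norm_num)
  have hdom : Integrable fun θ => 2 * σ ^ 2 * ((θ / σ) ^ 2 * φ (θ / σ)) + 2 * θ₀ ^ 2 * φ (θ / σ) :=
    ((hmom.comp_div hσ.ne').const_mul _).add ((hφ_int.comp_div hσ.ne').const_mul _)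
  have hθ₀ : θ₀ ^ 2 ≤ M ^ 2 * σ ^ 2 := by
    rw [← sq_abs, ← mul_pow]; exact pow_le_pow_left₀ (abs_nonneg _) hθ 2
  calc ∫ θ, (θ - θ₀) ^ 2 * (rexp (-(n : ℝ) * (θ - x) ^ 2 / 2) * φ (θ / σ))
      ≤ ∫ θ, 2 * σ ^ 2 * ((θ / σ) ^ 2 * φ (θ / σ)) + 2 * θ₀ ^ 2 * φ (θ / σ) := by
        refine integral_mono_of_nonneg
          (ae_of_all _ fun θ => mul_nonneg (sq_nonneg _) (mul_nonneg (exp_pos _).le (hφ0 _)))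
          hdom (ae_of_all _ fun θ => ?_)
        have hexp : rexp (-(n : ℝ) * (θ - x) ^ 2 / 2) ≤ 1 :=
          exp_le_one_iff.2 (by have := sq_nonneg (θ - x); have := n.cast_nonneg (α := ℝ); nlinarith)
        have hsq : (θ - θ₀) ^ 2 * rexp (-(n : ℝ) * (θ - x) ^ 2 / 2) ≤
            2 * σ ^ 2 * (θ / σ) ^ 2 + 2 * θ₀ ^ 2 := by
          have hθσ : σ ^ 2 * (θ / σ) ^ 2 = θ ^ 2 := by field_simp
          nlinarith [sq_nonneg (θ + θ₀), sq_nonneg (θ - θ₀), exp_pos (-(n : ℝ) * (θ - x) ^ 2 / 2)]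
        have := mul_le_mul_of_nonneg_right hsq (hφ0 (θ / σ))
        linarith
    _ = 2 * σ ^ 3 * (∫ u, u ^ 2 * φ u) + 2 * σ * θ₀ ^ 2 := by
        rw [integral_add ((hmom.comp_div hσ.ne').const_mul _)
            ((hφ_int.comp_div hσ.ne').const_mul _), integral_const_mul, integral_const_mul,
          Measure.integral_comp_div (fun u => u ^ 2 * φ u), Measure.integral_comp_div φ, hφ_prob,
          abs_of_pos hσ, smul_eq_mul, smul_eq_mul]
        ring
    _ ≤ 2 * σ ^ 3 * ((∫ u, u ^ 2 * φ u) + M ^ 2) := by nlinarith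

theorem le_postSecondMoment_denominator (hφ : Measurable φ) (hφ0 : ∀ x, 0 ≤ φ x)
    (hub : ∀ x, φ x ≤ Cφ) {cφ τ M : ℝ} (hlb : ∀ x ∈ Set.Ioo (-τ) τ, cφ ≤ φ x)
    (hτ : M + 1 ≤ τ) {n : ℕ} (hn : 0 < n) {σ θ₀ r : ℝ} (hθ : |θ₀| ≤ M * σ) (hr : 0 < r)
    (hrσ : r ≤ σ) (hrn : √n * r ≤ 1) (ε : ℝ) :
    cφ * (r / 4) * rexp (-(1 / 8) - max (|ε| - √n * r / 4) 0 ^ 2 / 2) ≤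
      ∫ θ, rexp (-(n : ℝ) * (θ - (θ₀ + ε / √n)) ^ 2 / 2) * φ (θ / σ) := by
  have hσ : 0 < σ := hr.trans_le hrσ
  have hn' : (0 : ℝ) < n := Nat.cast_pos.2 hn
  have hs : 0 < √n := sqrt_pos.2 hn'
  set m := max (|ε| - √n * r / 4) 0
  set p := if 0 ≤ ε then θ₀ + r / 4 else θ₀ - r / 2
  have hwindow : ∀ θ ∈ Set.Icc p (p + r / 4),
      r / 4 ≤ |θ - θ₀| ∧ |θ - θ₀| ≤ r / 2 ∧ 0 ≤ (θ - θ₀) * ε := by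
    rintro θ ⟨h1, h2⟩
    simp only [p] at h1 h2
    split_ifs at h1 h2 with hε
    · rw [abs_of_nonneg (by linarith)]
      exact ⟨by linarith, by linarith, mul_nonneg (by linarith) hε⟩
    · rw [abs_of_neg (by linarith)]
      exact ⟨by linarith, by linarith, mul_nonneg_of_nonpos_of_nonpos (by linarith) (by linarith)⟩
  have hpoint : ∀ θ ∈ Set.Icc p (p + r / 4),
      cφ * rexp (-(1 / 8) - m ^ 2 / 2) ≤
        rexp (-(n : ℝ) * (θ - (θ₀ + ε / √n)) ^ 2 / 2) * φ (θ / σ) := by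
    intro θ hθI
    obtain ⟨hlo, hhi, hsign⟩ := hwindow θ hθI
    have hprior : cφ ≤ φ (θ / σ) := by
      have habs : |θ| < τ * σ := by
        have := abs_sub_abs_le_abs_sub θ θ₀
        nlinarith
      refine hlb _ (abs_lt.1 ?_)
      rwa [abs_div, abs_of_pos hσ, div_lt_iff₀ hσ]
    have hkernel : (n : ℝ) * (θ - (θ₀ + ε / √n)) ^ 2 ≤ 1 / 4 + m ^ 2 := by
      have hsq := sub_sq_le_of_same_sign (a := √n * r / 4) (v := √n * (θ - θ₀)) (e := ε)
        (by rw [abs_mul, abs_of_pos hs]; nlinarith) (by rw [abs_mul, abs_of_pos hs]; nlinarith)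
        (by rw [mul_assoc]; positivity)
      have hrw : (n : ℝ) * (θ - (θ₀ + ε / √n)) ^ 2 = (√n * (θ - θ₀) - ε) ^ 2 := by
        have hsn := sq_sqrt hn'.le
        generalize √(n : ℝ) = s at hsn hs ⊢
        rw [← hsn]; field_simp; ring
      nlinarith [mul_pos hs hr]
    calc cφ * rexp (-(1 / 8) - m ^ 2 / 2)
        ≤ φ (θ / σ) * rexp (-(n : ℝ) * (θ - (θ₀ + ε / √n)) ^ 2 / 2) :=
          mul_le_mul hprior (exp_le_exp.2 (by linarith)) (exp_pos _).le (hφ0 _)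
      _ = _ := mul_comm _ _
  have hint := integrable_exp_mul_comp_div hφ hφ0 hub hn' σ (θ₀ + ε / √n)
  calc cφ * (r / 4) * rexp (-(1 / 8) - m ^ 2 / 2)
      = volume.real (Set.Icc p (p + r / 4)) • (cφ * rexp (-(1 / 8) - m ^ 2 / 2)) := by
        rw [Real.volume_real_Icc_of_le (by linarith), smul_eq_mul]; ring
    _ ≤ ∫ θ in Set.Icc p (p + r / 4), rexp (-(n : ℝ) * (θ - (θ₀ + ε / √n)) ^ 2 / 2) * φ (θ / σ) :=
        setIntegral_ge_of_const_le measurableSet_Icc measure_Icc_lt_top.ne hpoint hint.integrableOn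
    _ ≤ ∫ θ, rexp (-(n : ℝ) * (θ - (θ₀ + ε / √n)) ^ 2 / 2) * φ (θ / σ) :=
        setIntegral_le_integral hint (ae_of_all _ fun θ => mul_nonneg (exp_pos _).le (hφ0 _))

theorem postSecondMoment_le_of_inv_sqrt_le (hφ : Measurable φ) (hφ0 : ∀ x, 0 ≤ φ x)
    (hub : ∀ x, φ x ≤ Cφ) {cφ τ M : ℝ} (hc : 0 < cφ) (hlb : ∀ x ∈ Set.Ioo (-τ) τ, cφ ≤ φ x)
    (hτ : M + 1 ≤ τ) {n : ℕ} (hn : 0 < n) {σ θ₀ : ℝ} (hθ : |θ₀| ≤ M * σ) (hσn : (√n)⁻¹ ≤ σ)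
    (ε : ℝ) :
    postSecondMoment φ n σ θ₀ (θ₀ + ε / √n) ≤
      4 * √(2 * π) * rexp (1 / 8) * Cφ / cφ / n *
        ((1 + ε ^ 2) * rexp (max (|ε| - 1 / 4) 0 ^ 2 / 2)) := by
  have hn' : (0 : ℝ) < n := Nat.cast_pos.2 hn
  have hs : 0 < √n := sqrt_pos.2 hn'
  have hCφ : 0 ≤ Cφ := (hφ0 0).trans (hub 0)
  have hden := le_postSecondMoment_denominator hφ hφ0 hub hlb hτ hn hθ (inv_pos.2 hs) hσn
    (mul_inv_cancel₀ hs.ne').le ε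
  rw [mul_inv_cancel₀ hs.ne'] at hden
  refine (div_le_div₀ (by positivity) (postSecondMoment_numerator_le_of_bounded hφ0 hub hn σ θ₀ _)
    (by positivity) hden).trans_eq ?_
  have hsn := sq_sqrt hn'.le
  rw [add_sub_cancel_left, sqrt_div' _ hn'.le, exp_sub, exp_neg]
  generalize √(n : ℝ) = s at hsn hs ⊢
  rw [← hsn]
  field_simp

theorem postSecondMoment_le_of_sqrt_mul_le_one (hφ : Measurable φ) (hφ0 : ∀ x, 0 ≤ φ x)
    (hub : ∀ x, φ x ≤ Cφ) (hφ_prob : ∫ x, φ x = 1) (hmom : Integrable fun x => x ^ 2 * φ x)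
    {cφ τ M : ℝ} (hc : 0 < cφ) (hlb : ∀ x ∈ Set.Ioo (-τ) τ, cφ ≤ φ x) (hτ : M + 1 ≤ τ)
    {n : ℕ} (hn : 0 < n) {σ θ₀ : ℝ} (hσ : 0 < σ) (hθ : |θ₀| ≤ M * σ) (hσn : √n * σ ≤ 1)
    (ε : ℝ) :
    postSecondMoment φ n σ θ₀ (θ₀ + ε / √n) ≤
      8 * rexp (1 / 8) * ((∫ u, u ^ 2 * φ u) + M ^ 2) / cφ * σ ^ 2 *
        rexp (max (|ε| - √n * σ / 4) 0 ^ 2 / 2) := by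
  have hs : 0 < √n := sqrt_pos.2 (Nat.cast_pos.2 hn)
  have hm2 : 0 ≤ ∫ u, u ^ 2 * φ u := integral_nonneg fun u => mul_nonneg (sq_nonneg u) (hφ0 u)
  have hden := le_postSecondMoment_denominator hφ hφ0 hub hlb hτ hn hθ hσ le_rfl hσn ε
  refine (div_le_div₀ (by positivity)
    (postSecondMoment_numerator_le_of_moment hφ0 hφ_prob hmom hσ hθ n _) (by positivity)
    hden).trans_eq ?_
  rw [exp_sub, exp_neg]
  field_simp
  ring

theorem exists_lintegral_postSecondMoment_gaussianReal_le (hφ : Measurable φ)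
    (hφ0 : ∀ x, 0 ≤ φ x) (hub : ∀ x, φ x ≤ Cφ) (hφ_prob : ∫ x, φ x = 1)
    (hmom : Integrable fun x => x ^ 2 * φ x) {cφ τ M : ℝ} (hc : 0 < cφ)
    (hlb : ∀ x ∈ Set.Ioo (-τ) τ, cφ ≤ φ x) (hτ : M + 1 ≤ τ) :
    ∃ K, ∀ n : ℕ, 0 < n → ∀ σ θ₀ : ℝ, 0 < σ → |θ₀| ≤ M * σ →
      ∫⁻ e, ENNReal.ofReal (postSecondMoment φ n σ θ₀ (θ₀ + e / √n)) ∂gaussianReal 0 1 ≤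
        ENNReal.ofReal (K / n) := by
  set KA := 4 * √(2 * π) * rexp (1 / 8) * Cφ / cφ
  set KB := 8 * rexp (1 / 8) * ((∫ u, u ^ 2 * φ u) + M ^ 2) / cφ
  have hCφ : 0 ≤ Cφ := (hφ0 0).trans (hub 0)
  have hKA : 0 ≤ KA := by positivity
  have hKB : 0 ≤ KB := by
    have : 0 ≤ ∫ u, u ^ 2 * φ u := integral_nonneg fun u => mul_nonneg (sq_nonneg u) (hφ0 u)
    positivity
  refine ⟨2048 * KA + 8 * KB, fun n hn σ θ₀ hσ hθ => ?_⟩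
  have hn' : (0 : ℝ) < n := Nat.cast_pos.2 hn
  have hs : 0 < √n := sqrt_pos.2 hn'
  rcases le_total (√n)⁻¹ σ with hσn | hσn
  · calc _ ≤ ENNReal.ofReal (KA / n * 2048) :=
          lintegral_ofReal_le_of_le_mul (by positivity)
            (postSecondMoment_le_of_inv_sqrt_le hφ hφ0 hub hc hlb hτ hn hθ hσn)
            lintegral_one_add_sq_mul_exp_sq_gaussianReal_le
      _ ≤ ENNReal.ofReal ((2048 * KA + 8 * KB) / n) := by
          gcongr
          rw [div_mul_eq_mul_div]
          gcongr
          linarith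
  · have hσs : √n * σ ≤ 1 :=
      (mul_le_mul_of_nonneg_left hσn hs.le).trans_eq (mul_inv_cancel₀ hs.ne')
    calc _ ≤ ENNReal.ofReal (KB * σ ^ 2 * (2 / (√n * σ / 4))) :=
          lintegral_ofReal_le_of_le_mul (by positivity)
            (postSecondMoment_le_of_sqrt_mul_le_one hφ hφ0 hub hφ_prob hmom hc hlb hτ hn hσ hθ hσs)
            (lintegral_exp_sq_gaussianReal_le (by positivity) (by linarith))
      _ ≤ ENNReal.ofReal ((2048 * KA + 8 * KB) / n) := by
          gcongr
          have hsn := sq_sqrt hn'.le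
          generalize √(n : ℝ) = s at hsn hs hσs ⊢
          rw [← hsn, show KB * σ ^ 2 * (2 / (s * σ / 4)) = 8 * KB * (s * σ) / s ^ 2 by
            field_simp; ring]
          gcongr
          nlinarith

end Posterior

theorem contraction_H_delta_general {Ω : Type*} [MeasurableSpace Ω]
    (P : Measure Ω)
    (φ : ℝ → ℝ) (cφ Cφ τ M : ℝ)
    (hφ_meas : Measurable φ) (hφ_nonneg : ∀ x, 0 ≤ φ x)
    (hφ_prob : (∫ x : ℝ, φ x) = 1)
    (hc : 0 < cφ)
    (hub : ∀ x : ℝ, φ x ≤ Cφ)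
    (hlb : ∀ x ∈ Set.Ioo (-τ) τ, cφ ≤ φ x)
    (hmom : Integrable (fun x : ℝ => x ^ 2 * φ x))
    (hτ : M + 1 ≤ τ)
    (σ : ℕ+ → ℝ) (hσpos : ∀ l, 0 < σ l)
    (θ₀ : (l : ℕ+) → Fin (2 ^ (l : ℕ)) → ℝ)
    (hθ₀ : ∀ l k, |θ₀ l k| ≤ M * σ l)
    (ε : ((l : ℕ+) × Fin (2 ^ (l : ℕ))) → Ω → ℝ)
    (hεmeas : ∀ i, Measurable (ε i))
    (hεlaw : ∀ i, Measure.map (ε i) P = gaussianReal 0 1)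
    (δ : ℝ) (hδ : 1 / 2 < δ) :
    ∃ C : ℝ, ∀ n : ℕ, 1 ≤ n →
      (∫⁻ ω, ∑' (l : ℕ+) (k : Fin (2 ^ (l : ℕ))),
          ENNReal.ofReal ((2 : ℝ) ^ (-((l : ℕ) : ℝ)) * ((l : ℕ) : ℝ) ^ (-(2 * δ)) *
            postSecondMoment φ n (σ l) (θ₀ l k)
              (θ₀ l k + ε ⟨l, k⟩ ω / Real.sqrt n)) ∂P)
        ≤ ENNReal.ofReal (C / n) := by
  obtain ⟨K, hK⟩ := exists_lintegral_postSecondMoment_gaussianReal_le hφ_meas hφ_nonneg hub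
    hφ_prob hmom hc hlb hτ
  refine ⟨(∑' l : ℕ+, ((l : ℕ) : ℝ) ^ (-(2 * δ))) * K, fun n hn => ?_⟩
  rw [mul_div_assoc]
  refine lintegral_tsum_dyadic_le hδ (fun l k => by fun_prop) fun l k => ?_
  rw [← lintegral_map (f := fun e => ENNReal.ofReal (postSecondMoment φ n (σ l) (θ₀ l k)
    (θ₀ l k + e / √n))) (by fun_prop) (hεmeas _), hεlaw]
  exact hK n hn (σ l) (θ₀ l k) (hσpos l) (hθ₀ l k)

theorem contraction_H_delta {Ω : Type*} [MeasurableSpace Ω]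
    (P : Measure Ω) [IsProbabilityMeasure P]
    (φ : ℝ → ℝ) (cφ Cφ τ M : ℝ)
    (hφ_meas : Measurable φ) (hφ_nonneg : ∀ x, 0 ≤ φ x)
    (hφ_prob : (∫ x : ℝ, φ x) = 1)
    (hc : 0 < cφ) (hcC : cφ ≤ Cφ)
    (hub : ∀ x : ℝ, φ x ≤ Cφ)
    (hlb : ∀ x ∈ Set.Ioo (-τ) τ, cφ ≤ φ x)
    (hmom : Integrable (fun x : ℝ => x ^ 2 * φ x))
    (hM : 0 < M) (hτ : M + 1 ≤ τ)
    (σ : ℕ+ → ℝ) (hσpos : ∀ l, 0 < σ l)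
    (hσsum : Summable (fun l : ℕ+ => (2 : ℝ) ^ (l : ℕ) * σ l ^ 2))
    (θ₀ : (l : ℕ+) → Fin (2 ^ (l : ℕ)) → ℝ)
    (hθ₀ : ∀ l k, |θ₀ l k| ≤ M * σ l)
    (ε : ((l : ℕ+) × Fin (2 ^ (l : ℕ))) → Ω → ℝ)
    (hεmeas : ∀ i, Measurable (ε i))
    (hεlaw : ∀ i, Measure.map (ε i) P = gaussianReal 0 1)
    (hεindep : iIndepFun ε P)
    (δ : ℝ) (hδ : 1 / 2 < δ) :
    ∃ C : ℝ, ∀ n : ℕ, 1 ≤ n →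
      (∫⁻ ω, ∑' (l : ℕ+) (k : Fin (2 ^ (l : ℕ))),
          ENNReal.ofReal ((2 : ℝ) ^ (-((l : ℕ) : ℝ)) * ((l : ℕ) : ℝ) ^ (-(2 * δ)) *
            postSecondMoment φ n (σ l) (θ₀ l k)
              (θ₀ l k + ε ⟨l, k⟩ ω / Real.sqrt n)) ∂P)
        ≤ ENNReal.ofReal (C / n) :=
  contraction_H_delta_general P φ cφ Cφ τ M hφ_meas hφ_nonneg hφ_prob hc hub hlb hmom hτ σ hσpos θ₀
    hθ₀ ε hεmeas hεlaw δ hδ
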